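/- For every n ≥ 0, the map u ↦ Δ((1−‖x‖²) u) sends the space 𝒱^1_n of polynomials of degree n that are L²(B^d, (1−‖x‖²))-orthogonal to Π^d_{n−1} bijectively onto itself. Consequently M^0(𝒱^1_n) = (1−‖x‖²)·𝒱^1_n, where M^0(u)(x) = (1−‖x‖²) Δ((1−‖x‖²) u(x)). -/

import Mathlib

open MeasureTheory

/-- The polynomial Laplacian `Δ p = Σ_i ∂_i² p`. -/
noncomputable def polyLap {d : ℕ} (p : MvPolynomial (Fin d) ℝ) : MvPolynomial (Fin d) ℝ :=
  ∑ i : Fin d, MvPolynomial.pderiv i (MvPolynomial.pderiv i p)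

/-- The map `p ↦ Δ((1−‖x‖²) p)` on polynomials. -/
noncomputable def Tmap {d : ℕ} (p : MvPolynomial (Fin d) ℝ) : MvPolynomial (Fin d) ℝ :=
  polyLap ((1 - ∑ i : Fin d, MvPolynomial.X i ^ 2) * p)

/-- The space `𝒱^1_n` of polynomials of degree `≤ n` orthogonal to all polynomials of
lower degree in `L²(B^d, (1−‖x‖²) dx)`. -/
def V1set (d n : ℕ) : Set (MvPolynomial (Fin d) ℝ) :=
  {p | p.totalDegree ≤ n ∧
    ∀ q : MvPolynomial (Fin d) ℝ, q.totalDegree < n →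
      (∫ x in Metric.ball (0 : EuclideanSpace ℝ (Fin d)) 1,
        MvPolynomial.eval (fun t => x t) p * MvPolynomial.eval (fun t => x t) q *
          (1 - ‖x‖ ^ 2)) = 0}

namespace Stmt19

open MvPolynomial

variable {d : ℕ}


open MvPolynomial

noncomputable def wpoly (d : ℕ) : MvPolynomial (Fin d) ℝ := 1 - ∑ i : Fin d, X i ^ 2

variable {d : ℕ}

lemma Tmap_def (p : MvPolynomial (Fin d) ℝ) : Tmap p = polyLap (wpoly d * p) := rfl

lemma polyLap_add (p q : MvPolynomial (Fin d) ℝ) :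
    polyLap (p + q) = polyLap p + polyLap q := by
  simp [polyLap, Finset.sum_add_distrib]

lemma polyLap_smul (c : ℝ) (p : MvPolynomial (Fin d) ℝ) :
    polyLap (c • p) = c • polyLap p := by
  simp [polyLap, Finset.smul_sum]

lemma Tmap_add (p q : MvPolynomial (Fin d) ℝ) : Tmap (p + q) = Tmap p + Tmap q := by
  rw [Tmap_def, Tmap_def, Tmap_def, mul_add, polyLap_add]

lemma Tmap_smul (c : ℝ) (p : MvPolynomial (Fin d) ℝ) : Tmap (c • p) = c • Tmap p := by
  rw [Tmap_def, Tmap_def, mul_smul_comm, polyLap_smul]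

lemma totalDegree_pderiv_le (i : Fin d) (p : MvPolynomial (Fin d) ℝ) :
    (pderiv i p).totalDegree ≤ p.totalDegree - 1 := by
  classical
  conv_lhs => rw [p.as_sum]
  rw [map_sum]
  refine (totalDegree_finset_sum _ _).trans ?_
  refine Finset.sup_le fun s hs => ?_
  rw [pderiv_monomial]
  rcases eq_or_ne (s i) 0 with h0 | h0
  · simp [h0]
  · refine (totalDegree_monomial_le _ _).trans ?_
    show (s - Finsupp.single i 1).sum (fun _ e => e) ≤ p.totalDegree - 1
    have hle : Finsupp.single i 1 ≤ s := by
      rw [Finsupp.single_le_iff]; omega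
    have hsum : (s - Finsupp.single i 1).sum (fun _ e => e) + 1 = s.sum fun _ e => e := by
      have : (s - Finsupp.single i 1) + Finsupp.single i 1 = s := tsub_add_cancel_of_le hle
      conv_rhs => rw [← this]
      rw [Finsupp.sum_add_index' (fun _ => rfl) (fun _ _ _ => rfl)]
      simp
    have hst : s.sum (fun _ e => e) ≤ p.totalDegree := le_totalDegree hs
    omega

lemma totalDegree_polyLap_le (p : MvPolynomial (Fin d) ℝ) :
    (polyLap p).totalDegree ≤ p.totalDegree - 2 := by
  refine (totalDegree_finset_sum _ _).trans ?_
  refine Finset.sup_le fun i _ => ?_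
  calc (pderiv i (pderiv i p)).totalDegree ≤ (pderiv i p).totalDegree - 1 :=
        totalDegree_pderiv_le _ _
    _ ≤ p.totalDegree - 1 - 1 := by
        exact Nat.sub_le_sub_right (totalDegree_pderiv_le _ _) 1
    _ = p.totalDegree - 2 := by omega

lemma totalDegree_wpoly_le : (wpoly d).totalDegree ≤ 2 := by
  refine (totalDegree_sub _ _).trans ?_
  refine max_le (by simp) ?_
  refine (totalDegree_finset_sum _ _).trans ?_
  refine Finset.sup_le fun i _ => ?_
  simpa using totalDegree_X_pow (R := ℝ) i 2

lemma totalDegree_Tmap_le (p : MvPolynomial (Fin d) ℝ) :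
    (Tmap p).totalDegree ≤ p.totalDegree := by
  rw [Tmap_def]
  refine (totalDegree_polyLap_le _).trans ?_
  have := (totalDegree_mul (wpoly d) p).trans (Nat.add_le_add_right totalDegree_wpoly_le _)
  omega



lemma contEval (p : MvPolynomial (Fin d) ℝ) :
    Continuous fun x : EuclideanSpace ℝ (Fin d) => eval (fun t => x t) p := by
  refine (MvPolynomial.continuous_eval (p := p)).comp ?_
  exact continuous_pi fun t => (EuclideanSpace.proj t).continuous

lemma integrableOn_ball' {f : EuclideanSpace ℝ (Fin d) → ℝ} (hf : Continuous f) :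
    IntegrableOn f (Metric.ball 0 1) volume :=
  (hf.continuousOn.integrableOn_compact (isCompact_closedBall 0 1)).mono_set
    Metric.ball_subset_closedBall

lemma norm_sq_eq (x : EuclideanSpace ℝ (Fin d)) : ‖x‖ ^ 2 = ∑ i, x i ^ 2 := by
  rw [EuclideanSpace.norm_eq, Real.sq_sqrt (by positivity)]
  simp [sq_abs]

lemma eval_wpoly (x : EuclideanSpace ℝ (Fin d)) :
    eval (fun t => x t) (wpoly d) = 1 - ‖x‖ ^ 2 := by
  simp [wpoly, norm_sq_eq]

lemma eval_wpoly' (y : Fin d → ℝ) :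
    eval y (wpoly d) = 1 - ∑ i, y i ^ 2 := by
  simp [wpoly]

lemma analytic_eval (p : MvPolynomial (Fin d) ℝ) :
    AnalyticOnNhd ℝ (fun x : EuclideanSpace ℝ (Fin d) => eval (fun t => x t) p)
      Set.univ := by
  induction p using MvPolynomial.induction_on with
  | C a => simpa using analyticOnNhd_const
  | add p q hp hq => simp only [map_add]; exact hp.add hq
  | mul_X p j hp =>
    have hproj : AnalyticOnNhd ℝ (fun x : EuclideanSpace ℝ (Fin d) => x j) Set.univ := by
      have h1 : AnalyticOnNhd ℝ
          (⇑(EuclideanSpace.proj j : EuclideanSpace ℝ (Fin d) →L[ℝ] ℝ)) Set.univ :=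
        fun x _ => (EuclideanSpace.proj j : EuclideanSpace ℝ (Fin d) →L[ℝ] ℝ).analyticAt x
      have h2 : ⇑(EuclideanSpace.proj j : EuclideanSpace ℝ (Fin d) →L[ℝ] ℝ)
          = fun x : EuclideanSpace ℝ (Fin d) => x j := by
        funext x; simp
      rwa [h2] at h1
    simpa using hp.mul hproj

lemma eq_zero_of_eqOn_ball {p : MvPolynomial (Fin d) ℝ}
    (h : ∀ x ∈ Metric.ball (0 : EuclideanSpace ℝ (Fin d)) 1, eval (fun t => x t) p = 0) :
    p = 0 := by
  have hA := analytic_eval p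
  have hz : (fun x : EuclideanSpace ℝ (Fin d) => eval (fun t => x t) p)
      =ᶠ[nhds (0 : EuclideanSpace ℝ (Fin d))] 0 := by
    filter_upwards [Metric.ball_mem_nhds (0 : EuclideanSpace ℝ (Fin d)) one_pos] with x hx
    exact h x hx
  have hEq := hA.eqOn_zero_of_preconnected_of_eventuallyEq_zero isPreconnected_univ
    (Set.mem_univ 0) hz
  apply MvPolynomial.funext
  intro y
  have := hEq (Set.mem_univ ((WithLp.equiv 2 (Fin d → ℝ)).symm y))
  simpa using this

lemma hasDerivAt_eval_update (y : Fin d → ℝ) (i : Fin d) (p : MvPolynomial (Fin d) ℝ)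
    (t : ℝ) :
    HasDerivAt (fun s => eval (Function.update y i s) p)
      (eval (Function.update y i t) (pderiv i p)) t := by
  induction p using MvPolynomial.induction_on with
  | C a => simpa using hasDerivAt_const t a
  | add p q hp hq => simp only [map_add]; exact hp.add hq
  | mul_X p j hp =>
    rcases eq_or_ne i j with rfl | hij
    · have h1 := hp.mul (hasDerivAt_id t)
      have h2 : (fun s => eval (Function.update y i s) (p * X i)) =
          fun s => eval (Function.update y i s) p * s := by
        funext s; simp
      rw [h2]
      refine h1.congr_deriv ?_
      simp [pderiv_mul]
      ring
    · have h1 := hp.mul_const (y j)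
      have h2 : (fun s => eval (Function.update y i s) (p * X j)) =
          fun s => eval (Function.update y i s) p * y j := by
        funext s; simp [Function.update_of_ne (Ne.symm hij)]
      rw [h2]
      refine h1.congr_deriv ?_
      simp [pderiv_mul, pderiv_X_of_ne (Ne.symm hij), Function.update_of_ne (Ne.symm hij)]
      ring

lemma eqOn_zero_of_integral_zero {f : EuclideanSpace ℝ (Fin d) → ℝ} (hc : Continuous f)
    (hnn : ∀ x, 0 ≤ f x)
    (h : (∫ x in Metric.ball (0 : EuclideanSpace ℝ (Fin d)) 1, f x) = 0) :
    ∀ x ∈ Metric.ball (0 : EuclideanSpace ℝ (Fin d)) 1, f x = 0 := by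
  have hInt : IntegrableOn f (Metric.ball 0 1) volume := integrableOn_ball' hc
  have hae : f =ᵐ[volume.restrict (Metric.ball (0 : EuclideanSpace ℝ (Fin d)) 1)] 0 :=
    (integral_eq_zero_iff_of_nonneg (fun x => hnn x) hInt).mp h
  rw [Filter.EventuallyEq] at hae
  simp only [Pi.zero_apply] at hae
  rw [ae_restrict_iff' Metric.isOpen_ball.measurableSet] at hae
  by_contra hcon
  push_neg at hcon
  obtain ⟨x₀, hx₀, hfx₀⟩ := hcon
  have hpos : 0 < f x₀ := lt_of_le_of_ne (hnn x₀) (Ne.symm hfx₀)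
  set U : Set (EuclideanSpace ℝ (Fin d)) := Metric.ball 0 1 ∩ f ⁻¹' Set.Ioi 0 with hU
  have hUopen : IsOpen U := Metric.isOpen_ball.inter (isOpen_Ioi.preimage hc)
  have hUne : U.Nonempty := ⟨x₀, hx₀, hpos⟩
  have hUpos : 0 < volume U := hUopen.measure_pos volume hUne
  have hnull : volume U = 0 := by
    have : U ⊆ {x | ¬ (x ∈ Metric.ball (0 : EuclideanSpace ℝ (Fin d)) 1 → f x = 0)} := by
      intro x hx
      simp only [Set.mem_setOf_eq, Classical.not_imp]
      exact ⟨hx.1, ne_of_gt hx.2⟩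
    exact measure_mono_null this hae
  exact absurd hnull (ne_of_gt hUpos)


lemma contEvalPi {m : ℕ} (p : MvPolynomial (Fin m) ℝ) :
    Continuous fun y : Fin m → ℝ => eval y p := MvPolynomial.continuous_eval p

variable {m : ℕ}

-- the inner 1-D integral
lemma inner_integral_zero (i : Fin (m + 1)) (G : MvPolynomial (Fin (m + 1)) ℝ)
    (u : Fin m → ℝ) :
    (∫ t : ℝ, Set.indicator {y : Fin (m+1) → ℝ | ∑ j, y j ^ 2 < 1}
      (fun y => eval y (pderiv i (wpoly (m+1) * G))) (i.insertNth t u)) = 0 := by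
  classical
  set s : ℝ := ∑ k, u k ^ 2 with hs
  have hs0 : 0 ≤ s := Finset.sum_nonneg fun k _ => sq_nonneg _
  set H := wpoly (m+1) * G with hH
  have hmem : ∀ t : ℝ, (i.insertNth t u ∈ {y : Fin (m+1) → ℝ | ∑ j, y j ^ 2 < 1})
      ↔ t ^ 2 + s < 1 := by
    intro t
    simp only [Set.mem_setOf_eq]
    rw [Fin.sum_univ_succAbove (fun j => (i.insertNth (α := fun _ => ℝ) t u) j ^ 2) i]
    simp [hs]
  have hind : (fun t : ℝ => Set.indicator {y : Fin (m+1) → ℝ | ∑ j, y j ^ 2 < 1}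
        (fun y => eval y (pderiv i H)) (i.insertNth t u))
      = Set.indicator {t : ℝ | t ^ 2 + s < 1}
        (fun t => eval (i.insertNth t u) (pderiv i H)) := by
    funext t
    by_cases ht : t ^ 2 + s < 1
    · rw [Set.indicator_of_mem ((hmem t).mpr ht),
        Set.indicator_of_mem (show t ∈ {t : ℝ | t ^ 2 + s < 1} from ht)]
    · rw [Set.indicator_of_notMem (fun hmem' => ht ((hmem t).mp hmem')),
        Set.indicator_of_notMem (show t ∉ {t : ℝ | t ^ 2 + s < 1} from ht)]
  rw [hind, integral_indicator (by
    have : IsOpen {t : ℝ | t ^ 2 + s < 1} :=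
      isOpen_lt (by continuity) continuous_const
    exact this.measurableSet)]
  rcases le_or_gt 1 s with hs1 | hs1
  · have : {t : ℝ | t ^ 2 + s < 1} = ∅ := by
      ext t; simp only [Set.mem_setOf_eq, Set.mem_empty_iff_false, iff_false, not_lt]
      nlinarith [sq_nonneg t]
    rw [this]; simp
  · set r : ℝ := Real.sqrt (1 - s) with hr
    have hr0 : 0 < r := Real.sqrt_pos.mpr (by linarith)
    have hr2 : r ^ 2 = 1 - s := Real.sq_sqrt (by linarith)
    have hset : {t : ℝ | t ^ 2 + s < 1} = Set.Ioo (-r) r := by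
      ext t
      simp only [Set.mem_setOf_eq, Set.mem_Ioo]
      constructor
      · intro h
        have habs : |t| < r := by
          rw [hr]
          rw [← Real.sqrt_sq (abs_nonneg t)]
          exact Real.sqrt_lt_sqrt (by positivity) (by rw [sq_abs]; linarith)
        exact abs_lt.mp habs
      · intro ⟨h1, h2⟩
        have habs : |t| < r := abs_lt.mpr ⟨h1, h2⟩
        have := sq_lt_sq' h1 h2
        nlinarith
    rw [hset]
    -- now FTC
    have hcont : Continuous fun t : ℝ => eval (i.insertNth t u) (pderiv i H) := by
      refine (contEvalPi _).comp ?_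
      have hcu : Continuous fun t : ℝ =>
          Function.update (i.insertNth (α := fun _ => ℝ) 0 u) i t := by
        show Continuous ((fun f : (Fin (m+1) → ℝ) × ℝ => Function.update f.1 i f.2) ∘
          (fun t : ℝ => (i.insertNth (α := fun _ => ℝ) 0 u, t)))
        exact (continuous_update i).comp (continuous_const.prodMk continuous_id)
      have heq : (fun t : ℝ => i.insertNth (α := fun _ => ℝ) t u)
          = fun t : ℝ => Function.update (i.insertNth (α := fun _ => ℝ) 0 u) i t := by
        funext t; rw [Fin.update_insertNth]
      rw [heq]; exact hcu
    have hderiv : ∀ t ∈ Set.uIcc (-r) r,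
        HasDerivAt (fun t : ℝ => eval (i.insertNth t u) H)
          (eval (i.insertNth t u) (pderiv i H)) t := by
      intro t _
      have h1 : ∀ t' : ℝ, i.insertNth (α := fun _ => ℝ) t' u
          = Function.update (i.insertNth (α := fun _ => ℝ) 0 u) i t' :=
        fun t' => (Fin.update_insertNth (α := fun _ => ℝ) i 0 t' u).symm
      have h2 := hasDerivAt_eval_update (i.insertNth (α := fun _ => ℝ) 0 u) i H t
      simp only [← h1] at h2
      exact h2
    have hend : ∀ t : ℝ, t ^ 2 = 1 - s → eval (i.insertNth t u) H = 0 := by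
      intro t ht
      rw [hH, eval_mul]
      have : eval (i.insertNth t u) (wpoly (m+1)) = 0 := by
        rw [eval_wpoly']
        rw [Fin.sum_univ_succAbove (fun j => (i.insertNth (α := fun _ => ℝ) t u) j ^ 2) i]
        simp only [Fin.insertNth_apply_same, Fin.insertNth_apply_succAbove, ← hs]
        linarith
      rw [this, zero_mul]
    rw [← integral_Ioc_eq_integral_Ioo, ← intervalIntegral.integral_of_le (by linarith)]
    rw [intervalIntegral.integral_eq_sub_of_hasDerivAt hderiv
      (hcont.intervalIntegrable _ _)]
    rw [hend r hr2, hend (-r) (by rw [neg_sq]; exact hr2), sub_zero]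

lemma core (i : Fin (m + 1)) (G : MvPolynomial (Fin (m + 1)) ℝ) :
    (∫ x in Metric.ball (0 : EuclideanSpace ℝ (Fin (m + 1))) 1,
      eval (fun t => x t) (pderiv i (wpoly (m + 1) * G))) = 0 := by
  classical
  set F : (Fin (m + 1) → ℝ) → ℝ := fun y => eval y (pderiv i (wpoly (m + 1) * G)) with hF
  set S : Set (Fin (m + 1) → ℝ) := {y | ∑ j, y j ^ 2 < 1} with hS
  have hSopen : IsOpen S := isOpen_lt (by continuity) continuous_const
  have hpre : (MeasurableEquiv.toLp 2 (Fin (m + 1) → ℝ)).symm.symm ⁻¹' (Metric.ball 0 1) = S := by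
    ext y
    simp only [Set.mem_preimage, Metric.mem_ball, dist_zero_right, hS, Set.mem_setOf_eq]
    rw [EuclideanSpace.norm_eq]
    rw [Real.sqrt_lt' one_pos]
    simp [MeasurableEquiv.coe_toLp, sq_abs]
  have h1 := ((EuclideanSpace.volume_preserving_symm_measurableEquiv_toLp
      (Fin (m + 1))).symm).setIntegral_preimage_emb
      (MeasurableEquiv.measurableEmbedding _)
      (fun x : EuclideanSpace ℝ (Fin (m + 1)) => eval (fun t => x t) (pderiv i (wpoly (m + 1) * G)))
      (Metric.ball 0 1)
  rw [← h1, hpre]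
  have heval : ∀ y : Fin (m + 1) → ℝ,
      eval (fun t => ((MeasurableEquiv.toLp 2 (Fin (m + 1) → ℝ)).symm.symm y) t)
        (pderiv i (wpoly (m + 1) * G)) = F y := by
    intro y; rfl
  simp only [heval]
  rw [← integral_indicator hSopen.measurableSet]
  have h2 := ((volume_preserving_piFinSuccAbove (fun _ : Fin (m + 1) => ℝ) i).symm).integral_comp'
      (f := (MeasurableEquiv.piFinSuccAbove (fun _ : Fin (m + 1) => ℝ) i).symm)
      (g := S.indicator F)
  rw [← h2]
  have hIpi : Integrable (S.indicator F) (volume : Measure (Fin (m + 1) → ℝ)) := by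
    rw [integrable_indicator_iff hSopen.measurableSet]
    have hsub : S ⊆ Metric.closedBall (0 : Fin (m + 1) → ℝ) 1 := by
      intro y hy
      rw [Metric.mem_closedBall, dist_zero_right]
      rw [pi_norm_le_iff_of_nonneg (by norm_num)]
      intro j
      rw [Real.norm_eq_abs, abs_le]
      have h1 : y j ^ 2 ≤ ∑ k, y k ^ 2 :=
        Finset.single_le_sum (fun k _ => sq_nonneg (y k)) (Finset.mem_univ j)
      have h2 : y j ^ 2 < 1 := lt_of_le_of_lt h1 hy
      constructor <;> nlinarith
    exact ((contEvalPi _).continuousOn.integrableOn_compact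
      (isCompact_closedBall _ _)).mono_set hsub
  have hIprod : Integrable
      (fun z : ℝ × (Fin m → ℝ) => S.indicator F
        ((MeasurableEquiv.piFinSuccAbove (fun _ : Fin (m + 1) => ℝ) i).symm z))
      ((volume : Measure ℝ).prod (volume : Measure (Fin m → ℝ))) := by
    have := ((volume_preserving_piFinSuccAbove (fun _ : Fin (m + 1) => ℝ) i).symm).integrable_comp_emb
      (MeasurableEquiv.measurableEmbedding _) (g := S.indicator F)
    rw [show ((volume : Measure ℝ).prod (volume : Measure (Fin m → ℝ)))
        = (volume : Measure (ℝ × (Fin m → ℝ))) from (Measure.volume_eq_prod _ _).symm]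
    exact this.mpr hIpi
  rw [show (volume : Measure (ℝ × (Fin m → ℝ)))
      = (volume : Measure ℝ).prod (volume : Measure (Fin m → ℝ)) from Measure.volume_eq_prod _ _]
  rw [integral_prod_symm _ hIprod]
  have hinner : ∀ u : Fin m → ℝ,
      (∫ t : ℝ, S.indicator F
        ((MeasurableEquiv.piFinSuccAbove (fun _ : Fin (m + 1) => ℝ) i).symm (t, u))) = 0 := by
    intro u
    have hsymm : ∀ t : ℝ,
        (MeasurableEquiv.piFinSuccAbove (fun _ : Fin (m + 1) => ℝ) i).symm (t, u)
          = i.insertNth t u := by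
      intro t
      simp [MeasurableEquiv.piFinSuccAbove_symm_apply, Fin.insertNthEquiv]
    simp only [hsymm]
    exact inner_integral_zero i G u
  simp only [hinner, integral_zero]

lemma key_identity (p q : MvPolynomial (Fin d) ℝ) :
    (∑ i : Fin d, pderiv i (wpoly d *
        (q * pderiv i (wpoly d * p) - p * pderiv i (wpoly d * q))))
    = polyLap (wpoly d * p) * (wpoly d * q) - (wpoly d * p) * polyLap (wpoly d * q) := by
  rw [polyLap, polyLap, Finset.sum_mul, Finset.mul_sum, ← Finset.sum_sub_distrib]
  refine Finset.sum_congr rfl fun i _ => ?_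
  simp only [map_sub, map_add, pderiv_mul]
  ring

lemma key_identity2 (p : MvPolynomial (Fin d) ℝ) :
    (∑ i : Fin d, pderiv i (wpoly d * (p * pderiv i (wpoly d * p))))
    = polyLap (wpoly d * p) * (wpoly d * p)
      + ∑ i : Fin d, (pderiv i (wpoly d * p)) ^ 2 := by
  rw [polyLap, Finset.sum_mul, ← Finset.sum_add_distrib]
  refine Finset.sum_congr rfl fun i _ => ?_
  simp only [map_sub, map_add, pderiv_mul]
  ring


lemma eval_const_of_pderiv_zero {f : MvPolynomial (Fin d) ℝ} (h : ∀ i, pderiv i f = 0)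
    (y : Fin d → ℝ) : eval y f = eval 0 f := by
  classical
  have key : ∀ (s : Finset (Fin d)) (y z : Fin d → ℝ), (∀ j, j ∉ s → y j = z j) →
      eval y f = eval z f := by
    intro s
    induction s using Finset.induction_on with
    | empty =>
      intro y z hyz
      have : y = z := funext fun j => hyz j (Finset.notMem_empty j)
      rw [this]
    | @insert i s hi ih =>
      intro y z hyz
      have hconst : ∀ t₁ t₂ : ℝ,
          eval (Function.update y i t₁) f = eval (Function.update y i t₂) f := by
        intro t₁ t₂
        have hdiff : ∀ t : ℝ, HasDerivAt (fun u => eval (Function.update y i u) f) 0 t := by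
          intro t
          have h0 := hasDerivAt_eval_update y i f t
          rw [h i] at h0
          simpa using h0
        exact is_const_of_deriv_eq_zero (fun t => (hdiff t).differentiableAt)
          (fun t => (hdiff t).deriv) t₁ t₂
      have h1 : eval y f = eval (Function.update y i (z i)) f := by
        calc eval y f = eval (Function.update y i (y i)) f := by rw [Function.update_eq_self]
          _ = eval (Function.update y i (z i)) f := hconst _ _
      rw [h1]
      apply ih
      intro j hj
      rcases eq_or_ne j i with rfl | hji
      · simp
      · rw [Function.update_of_ne hji]
        exact hyz j (by simp [hj, hji])
  exact key Finset.univ y 0 fun j hj => absurd (Finset.mem_univ j) hj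

lemma cont_integrand (p q : MvPolynomial (Fin d) ℝ) :
    Continuous (fun x : EuclideanSpace ℝ (Fin d) =>
      eval (fun t => x t) p * eval (fun t => x t) q * (1 - ‖x‖ ^ 2)) :=
  ((contEval p).mul (contEval q)).mul (continuous_const.sub (continuous_norm.pow 2))

lemma symm_integral (p q : MvPolynomial (Fin (m + 1)) ℝ) :
    (∫ x in Metric.ball (0 : EuclideanSpace ℝ (Fin (m + 1))) 1,
        eval (fun t => x t) (Tmap p) * eval (fun t => x t) q * (1 - ‖x‖ ^ 2))
    = ∫ x in Metric.ball (0 : EuclideanSpace ℝ (Fin (m + 1))) 1,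
        eval (fun t => x t) p * eval (fun t => x t) (Tmap q) * (1 - ‖x‖ ^ 2) := by
  have hpt : ∀ x : EuclideanSpace ℝ (Fin (m + 1)),
      eval (fun t => x t) (Tmap p) * eval (fun t => x t) q * (1 - ‖x‖ ^ 2)
        - eval (fun t => x t) p * eval (fun t => x t) (Tmap q) * (1 - ‖x‖ ^ 2)
      = ∑ i, eval (fun t => x t) (pderiv i (wpoly (m + 1) *
          (q * pderiv i (wpoly (m + 1) * p) - p * pderiv i (wpoly (m + 1) * q)))) := by
    intro x
    rw [← map_sum, key_identity, ← eval_wpoly x, Tmap_def, Tmap_def]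
    simp only [map_sub, map_mul]
    ring
  have hsum0 : (∫ x in Metric.ball (0 : EuclideanSpace ℝ (Fin (m + 1))) 1,
      ∑ i, eval (fun t => x t) (pderiv i (wpoly (m + 1) *
          (q * pderiv i (wpoly (m + 1) * p) - p * pderiv i (wpoly (m + 1) * q))))) = 0 := by
    rw [integral_finset_sum _ fun i _ => integrableOn_ball' (contEval _)]
    exact Finset.sum_eq_zero fun i _ => core i _
  have hI1 := integrableOn_ball' (cont_integrand (Tmap p) q)
  have hI2 := integrableOn_ball' (cont_integrand p (Tmap q))
  have hdiff := integral_sub hI1 hI2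
  have hzero : (∫ x in Metric.ball (0 : EuclideanSpace ℝ (Fin (m + 1))) 1,
      (eval (fun t => x t) (Tmap p) * eval (fun t => x t) q * (1 - ‖x‖ ^ 2)
        - eval (fun t => x t) p * eval (fun t => x t) (Tmap q) * (1 - ‖x‖ ^ 2))) = 0 := by
    simp_rw [hpt]
    exact hsum0
  rw [hdiff] at hzero
  linarith

lemma Tmap_injective {p : MvPolynomial (Fin (m + 1)) ℝ} (h : Tmap p = 0) : p = 0 := by
  classical
  have hid : (∑ i : Fin (m + 1), pderiv i (wpoly (m + 1) *
        (p * pderiv i (wpoly (m + 1) * p))))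
      = ∑ i : Fin (m + 1), (pderiv i (wpoly (m + 1) * p)) ^ 2 := by
    rw [key_identity2 p, show polyLap (wpoly (m + 1) * p) = 0 from h, zero_mul, zero_add]
  have hint0 : (∫ x in Metric.ball (0 : EuclideanSpace ℝ (Fin (m + 1))) 1,
      ∑ i : Fin (m + 1), (eval (fun t => x t) (pderiv i (wpoly (m + 1) * p))) ^ 2) = 0 := by
    have hpt : ∀ x : EuclideanSpace ℝ (Fin (m + 1)),
        (∑ i : Fin (m + 1), (eval (fun t => x t) (pderiv i (wpoly (m + 1) * p))) ^ 2)
        = ∑ i : Fin (m + 1), eval (fun t => x t)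
            (pderiv i (wpoly (m + 1) * (p * pderiv i (wpoly (m + 1) * p)))) := by
      intro x
      simp only [← map_pow]
      rw [← map_sum, ← map_sum, ← hid]
    simp_rw [hpt]
    rw [integral_finset_sum _ fun i _ => integrableOn_ball' (contEval _)]
    exact Finset.sum_eq_zero fun i _ => core i _
  have hvanish := eqOn_zero_of_integral_zero
    (continuous_finset_sum _ fun i _ => (contEval (pderiv i (wpoly (m + 1) * p))).pow 2)
    (fun x => Finset.sum_nonneg fun i _ => sq_nonneg _) hint0
  have hpz : ∀ i : Fin (m + 1), pderiv i (wpoly (m + 1) * p) = 0 := by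
    intro i
    apply eq_zero_of_eqOn_ball
    intro x hx
    have hsum := hvanish x hx
    have := (Finset.sum_eq_zero_iff_of_nonneg
      (fun j (_ : j ∈ Finset.univ) => sq_nonneg
        (eval (fun t => x t) (pderiv j (wpoly (m + 1) * p))))).mp hsum i (Finset.mem_univ i)
    exact pow_eq_zero_iff two_ne_zero |>.mp this
  have hconst := eval_const_of_pderiv_zero hpz
  have hy0 : eval (0 : Fin (m + 1) → ℝ) (wpoly (m + 1) * p) = 0 := by
    have h1 := hconst (fun j => if j = 0 then 1 else 0)
    rw [eval_mul, eval_wpoly'] at h1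
    have h2 : (∑ i : Fin (m + 1), (if i = 0 then (1 : ℝ) else 0) ^ 2) = 1 := by
      simp [apply_ite (fun z : ℝ => z ^ 2)]
    rw [h2] at h1
    simpa using h1.symm
  have hfzero : wpoly (m + 1) * p = 0 := by
    apply MvPolynomial.funext
    intro y
    rw [hconst y, hy0, map_zero]
  have hwne : wpoly (m + 1) ≠ 0 := by
    intro hw
    have := congrArg (eval (0 : Fin (m + 1) → ℝ)) hw
    rw [eval_wpoly'] at this
    simp at this
  rcases mul_eq_zero.mp hfzero with hw | hp
  · exact absurd hw hwne
  · exact hp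

lemma Tmap_sub (p q : MvPolynomial (Fin d) ℝ) : Tmap (p - q) = Tmap p - Tmap q := by
  have h := Tmap_add (d := d) (p - q) q
  rw [sub_add_cancel] at h
  rw [h]
  ring

lemma Tmap_mem_V1set {n : ℕ} {p : MvPolynomial (Fin (m + 1)) ℝ}
    (hp : p ∈ V1set (m + 1) n) : Tmap p ∈ V1set (m + 1) n := by
  constructor
  · exact (totalDegree_Tmap_le p).trans hp.1
  · intro q hq
    rw [symm_integral p q]
    exact hp.2 (Tmap q) (lt_of_le_of_lt (totalDegree_Tmap_le q) hq)

noncomputable def Vsub (m n : ℕ) :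
    Submodule ℝ (MvPolynomial.restrictTotalDegree (Fin (m + 1)) ℝ n) where
  carrier := {p | ∀ q : MvPolynomial (Fin (m + 1)) ℝ, q.totalDegree < n →
    (∫ x in Metric.ball (0 : EuclideanSpace ℝ (Fin (m + 1))) 1,
      eval (fun t => x t) (p : MvPolynomial (Fin (m + 1)) ℝ) * eval (fun t => x t) q *
        (1 - ‖x‖ ^ 2)) = 0}
  zero_mem' := by
    intro q hq
    simp
  add_mem' := by
    intro a b ha hb q hq
    have hsplit : (fun x : EuclideanSpace ℝ (Fin (m + 1)) =>
        eval (fun t => x t) ((a : MvPolynomial (Fin (m + 1)) ℝ) + b) * eval (fun t => x t) q *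
          (1 - ‖x‖ ^ 2))
        = fun x : EuclideanSpace ℝ (Fin (m + 1)) =>
            eval (fun t => x t) (a : MvPolynomial (Fin (m + 1)) ℝ) * eval (fun t => x t) q *
              (1 - ‖x‖ ^ 2)
            + eval (fun t => x t) (b : MvPolynomial (Fin (m + 1)) ℝ) * eval (fun t => x t) q *
              (1 - ‖x‖ ^ 2) := by
      funext x; rw [map_add]; ring
    show (∫ x in Metric.ball (0 : EuclideanSpace ℝ (Fin (m + 1))) 1,
      eval (fun t => x t) ((a : MvPolynomial (Fin (m + 1)) ℝ) + b) * eval (fun t => x t) q *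
        (1 - ‖x‖ ^ 2)) = 0
    rw [hsplit, integral_add (integrableOn_ball' (cont_integrand _ _))
      (integrableOn_ball' (cont_integrand _ _)), ha q hq, hb q hq, add_zero]
  smul_mem' := by
    intro c a ha q hq
    have hsplit : (fun x : EuclideanSpace ℝ (Fin (m + 1)) =>
        eval (fun t => x t) (c • (a : MvPolynomial (Fin (m + 1)) ℝ)) * eval (fun t => x t) q *
          (1 - ‖x‖ ^ 2))
        = fun x : EuclideanSpace ℝ (Fin (m + 1)) =>
            c * (eval (fun t => x t) (a : MvPolynomial (Fin (m + 1)) ℝ) * eval (fun t => x t) q *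
              (1 - ‖x‖ ^ 2)) := by
      funext x
      rw [MvPolynomial.smul_eq_C_mul, map_mul, eval_C]; ring
    show (∫ x in Metric.ball (0 : EuclideanSpace ℝ (Fin (m + 1))) 1,
      eval (fun t => x t) (c • (a : MvPolynomial (Fin (m + 1)) ℝ)) * eval (fun t => x t) q *
        (1 - ‖x‖ ^ 2)) = 0
    rw [hsplit, integral_const_mul, ha q hq, mul_zero]

lemma mem_V1set_iff {n : ℕ} (p : MvPolynomial (Fin (m + 1)) ℝ) :
    p ∈ V1set (m + 1) n ↔ ∃ hM : p ∈ MvPolynomial.restrictTotalDegree (Fin (m + 1)) ℝ n,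
      (⟨p, hM⟩ : MvPolynomial.restrictTotalDegree (Fin (m + 1)) ℝ n) ∈ Vsub m n := by
  constructor
  · intro hp
    exact ⟨(MvPolynomial.mem_restrictTotalDegree _ _ _).mpr hp.1, fun q hq => hp.2 q hq⟩
  · rintro ⟨hM, hV⟩
    exact ⟨(MvPolynomial.mem_restrictTotalDegree _ _ _).mp hM, fun q hq => hV q hq⟩

noncomputable def TmapL (m n : ℕ) : Vsub m n →ₗ[ℝ] Vsub m n where
  toFun p := ⟨⟨Tmap ((p : MvPolynomial.restrictTotalDegree (Fin (m + 1)) ℝ n)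
      : MvPolynomial (Fin (m + 1)) ℝ),
    by
      rw [MvPolynomial.mem_restrictTotalDegree]
      exact (totalDegree_Tmap_le _).trans
        ((MvPolynomial.mem_restrictTotalDegree _ _ _).mp
          (p : MvPolynomial.restrictTotalDegree (Fin (m + 1)) ℝ n).2)⟩,
    by
      intro q hq
      rw [symm_integral]
      exact p.2 (Tmap q) (lt_of_le_of_lt (totalDegree_Tmap_le q) hq)⟩
  map_add' p q := by
    apply Subtype.ext; apply Subtype.ext
    simp [Tmap_add]
  map_smul' c p := by
    apply Subtype.ext; apply Subtype.ext
    simp [Tmap_smul]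

end Stmt19

set_option synthInstance.maxHeartbeats 1000000 in
set_option maxHeartbeats 2000000 in
/-- The map `u ↦ Δ((1−‖x‖²)u)` sends `𝒱^1_n` bijectively onto itself; consequently
`M^0(𝒱^1_n) = (1−‖x‖²)·𝒱^1_n`, where `M^0(u) = (1−‖x‖²)Δ((1−‖x‖²)u)`. -/
theorem stmt19 {d : ℕ} (hd : 1 ≤ d) (n : ℕ) :
    Tmap '' V1set d n = V1set d n ∧
    Set.InjOn (Tmap (d := d)) (V1set d n) ∧
    {f : EuclideanSpace ℝ (Fin d) → ℝ | ∃ p ∈ V1set d n,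
        f = fun x => (1 - ‖x‖ ^ 2) * MvPolynomial.eval (fun t => x t) (Tmap p)}
      = {f : EuclideanSpace ℝ (Fin d) → ℝ | ∃ p ∈ V1set d n,
          f = fun x => (1 - ‖x‖ ^ 2) * MvPolynomial.eval (fun t => x t) p} := by
  classical
  obtain ⟨m, rfl⟩ : ∃ m, d = m + 1 := ⟨d - 1, by omega⟩
  have hinj : Function.Injective (Stmt19.TmapL m n) := by
    intro a b hab
    have h1 : Tmap (((a : MvPolynomial.restrictTotalDegree (Fin (m + 1)) ℝ n))
          : MvPolynomial (Fin (m + 1)) ℝ)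
        = Tmap (((b : MvPolynomial.restrictTotalDegree (Fin (m + 1)) ℝ n))
          : MvPolynomial (Fin (m + 1)) ℝ) := by
      have := congrArg (fun v : Stmt19.Vsub m n =>
        ((v : MvPolynomial.restrictTotalDegree (Fin (m + 1)) ℝ n)
          : MvPolynomial (Fin (m + 1)) ℝ)) hab
      exact this
    have h2 : Tmap ((((a : MvPolynomial.restrictTotalDegree (Fin (m + 1)) ℝ n))
          : MvPolynomial (Fin (m + 1)) ℝ)
        - (((b : MvPolynomial.restrictTotalDegree (Fin (m + 1)) ℝ n))
          : MvPolynomial (Fin (m + 1)) ℝ)) = 0 := by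
      rw [Stmt19.Tmap_sub, h1, sub_self]
    have h3 := Stmt19.Tmap_injective h2
    have h4 := sub_eq_zero.mp h3
    exact Subtype.ext (Subtype.ext h4)
  have hsurj : Function.Surjective (Stmt19.TmapL m n) := by
    exact (LinearMap.injective_iff_surjective (K := ℝ) (V := Stmt19.Vsub m n)
      (f := ⟨⟨Stmt19.TmapL m n, fun a b => Subtype.ext (Subtype.ext
        (by simp [Stmt19.TmapL, Stmt19.Tmap_add]))⟩,
        fun c a => Subtype.ext (Subtype.ext (by simp [Stmt19.TmapL]))⟩)).mp hinj
  have himage : Tmap '' V1set (m + 1) n = V1set (m + 1) n := by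
    apply Set.Subset.antisymm
    · rintro _ ⟨p, hp, rfl⟩
      exact Stmt19.Tmap_mem_V1set hp
    · intro p hp
      obtain ⟨hM, hV⟩ := (Stmt19.mem_V1set_iff p).mp hp
      obtain ⟨u, hu⟩ := hsurj ⟨⟨p, hM⟩, hV⟩
      refine ⟨((u : MvPolynomial.restrictTotalDegree (Fin (m + 1)) ℝ n)
        : MvPolynomial (Fin (m + 1)) ℝ), ?_, ?_⟩
      · exact (Stmt19.mem_V1set_iff _).mpr
          ⟨(u : MvPolynomial.restrictTotalDegree (Fin (m + 1)) ℝ n).2, u.2⟩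
      · have := congrArg (fun v : Stmt19.Vsub m n =>
          ((v : MvPolynomial.restrictTotalDegree (Fin (m + 1)) ℝ n)
            : MvPolynomial (Fin (m + 1)) ℝ)) hu
        exact this
  have hInjOn : Set.InjOn (Tmap (d := m + 1)) (V1set (m + 1) n) := by
    intro a _ b _ hab
    have h2 : Tmap (a - b) = 0 := by rw [Stmt19.Tmap_sub, hab, sub_self]
    exact sub_eq_zero.mp (Stmt19.Tmap_injective h2)
  refine ⟨himage, hInjOn, ?_⟩
  ext f
  simp only [Set.mem_setOf_eq]
  constructor
  · rintro ⟨p, hp, rfl⟩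
    exact ⟨Tmap p, Stmt19.Tmap_mem_V1set hp, rfl⟩
  · rintro ⟨p, hp, rfl⟩
    have hp' := hp
    rw [← himage] at hp'
    obtain ⟨u, hu, hTu⟩ := hp'
    exact ⟨u, hu, by rw [hTu]⟩
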